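/- arXiv:2208.05435 — 3 statements merged into one kernel-verified Lean document; each statement's English description precedes it below -/
import Mathlib

section
/- Suppose there is a nontrivial solution u of the Euler–Lagrange (marginal-stability) equation (f u')' − g u = 0 on [r₁, r₂] with u(r₁) = 0 which also vanishes at some point r₀ with r₁ < r₀ < r₂. Then for every C² solution ξ₀ of the Euler–Lagrange equation on [r₁, r₂] there exists a continuous, piecewise continuously differentiable function ξ : [r₁, r₂] → ℝ with ξ(r₁) = ξ₀(r₁) and ξ(r₂) = ξ₀(r₂) such that W(r₁, r₂; ξ) < W(r₁, r₂; ξ₀). (Newcomb's Theorem, Appendix D, Theorem 1.) -/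
/-!
At a solution `ξ₀` of the Euler–Lagrange equation the first variation of `W` reduces, after an
integration by parts against `(f ξ₀')' = g ξ₀`, to the boundary term `[f ξ₀' η]`, so
`W(ξ₀ + η) = W(ξ₀) + W(η)` whenever `η` vanishes at `r₁` and `r₂`. Take `η = ζ + ε ψ`, where `ζ`
is `u` on `[r₁, r₀]` and `0` on `[r₀, r₂]`, and `ψ` is smooth with `ψ(r₁) = ψ(r₂) = 0 < ψ(r₀)`.
Integrating by parts on `[r₁, r₀]` once more gives `W(ζ) = 0` and a cross term
`2 ε f(r₀) u'(r₀) ψ(r₀)`, so `W(ξ₀ + η) - W(ξ₀) = 2 ε C + ε² W(ψ)` with `C ≠ 0`, because a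
solution of the linear second-order equation with `u(r₀) = u'(r₀) = 0` vanishes identically.
Choosing the sign and size of `ε` makes this negative.
-/

def PiecewiseC1On (ξ : ℝ → ℝ) (r₁ r₂ : ℝ) : Prop :=
  ContinuousOn ξ (Set.Icc r₁ r₂) ∧
    ∃ S : Finset ℝ, ∀ x ∈ Set.Icc r₁ r₂, x ∉ S →
      DifferentiableAt ℝ ξ x ∧ ContinuousAt (deriv ξ) x

noncomputable def energyW (f g : ℝ → ℝ) (r₁ r₂ : ℝ) (ξ : ℝ → ℝ) : ℝ :=
  (Real.pi / 2) * ∫ r in r₁..r₂, (f r * (deriv ξ r) ^ 2 + g r * (ξ r) ^ 2)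

/-- `u` (with derivative `u'`) solves the Euler–Lagrange (marginal-stability)
equation `(f u')' − g u = 0` on `[r₁, r₂]`. -/
def SolvesEulerLagrange (f g : ℝ → ℝ) (r₁ r₂ : ℝ) (u u' : ℝ → ℝ) : Prop :=
  (∀ r ∈ Set.Icc r₁ r₂, HasDerivAt u (u' r) r) ∧
    (∀ r ∈ Set.Icc r₁ r₂, HasDerivAt (fun s => f s * u' s) (g r * u r) r)

open Set MeasureTheory intervalIntegral Filter Topology

lemma exists_two_mul_mul_add_sq_mul_neg {C : ℝ} (hC : C ≠ 0) (Q : ℝ) :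
    ∃ ε : ℝ, 2 * ε * C + ε ^ 2 * Q < 0 := by
  have hs : 0 < 1 + |Q| := by positivity
  refine ⟨-C / (1 + |Q|), ?_⟩
  have key : 2 * (-C / (1 + |Q|)) * C + (-C / (1 + |Q|)) ^ 2 * Q
      = C ^ 2 / (1 + |Q|) ^ 2 * (Q - 2 * (1 + |Q|)) := by
    field_simp
    ring
  rw [key]
  exact mul_neg_of_pos_of_neg (by positivity) (by linarith [le_abs_self Q])

lemma lipschitzWith_mul_snd_mul_fst {p q : ℝ} {K : NNReal} (hp : |p| ≤ K) (hq : |q| ≤ K) :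
    LipschitzWith K fun y : ℝ × ℝ => (p * y.2, q * y.1) := by
  refine LipschitzWith.of_dist_le_mul fun y z => ?_
  simp only [Prod.dist_eq, Real.dist_eq, ← mul_sub, abs_mul]
  exact max_le (mul_le_mul hp (le_max_right _ _) (abs_nonneg _) K.2)
    (mul_le_mul hq (le_max_left _ _) (abs_nonneg _) K.2)

lemma hasDerivAt_of_eqOn_Icc {ξ w : ℝ → ℝ} {a b x d : ℝ} (h : EqOn ξ w (Icc a b))
    (hx : x ∈ Ioo a b) (hw : HasDerivAt w d x) : HasDerivAt ξ d x :=
  hw.congr_of_eventuallyEq (h.eventuallyEq_of_mem (Icc_mem_nhds hx.1 hx.2))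

lemma differentiableAt_and_continuousAt_deriv_of_eqOn {ξ w w' : ℝ → ℝ} {a b x : ℝ}
    (h : EqOn ξ w (Icc a b)) (hw : ∀ y ∈ Icc a b, HasDerivAt w (w' y) y)
    (hw' : ContinuousOn w' (Icc a b)) (hx : x ∈ Ioo a b) :
    DifferentiableAt ℝ ξ x ∧ ContinuousAt (deriv ξ) x := by
  have hderiv : ∀ y ∈ Ioo a b, HasDerivAt ξ (w' y) y := fun y hy =>
    hasDerivAt_of_eqOn_Icc h hy (hw y (Ioo_subset_Icc_self hy))
  have heq : deriv ξ =ᶠ[𝓝 x] w' :=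
    eventually_of_mem (Ioo_mem_nhds hx.1 hx.2) fun y hy => (hderiv y hy).deriv
  exact ⟨(hderiv x hx).differentiableAt,
    ((hw' x (Ioo_subset_Icc_self hx)).continuousAt (Icc_mem_nhds hx.1 hx.2)).congr heq.symm⟩

lemma piecewiseC1On_of_eqOn {ξ w₁ w₁' w₂ w₂' : ℝ → ℝ} {a b c : ℝ} (hac : a ≤ c) (hcb : c ≤ b)
    (h₁ : EqOn ξ w₁ (Icc a c)) (hw₁ : ∀ x ∈ Icc a c, HasDerivAt w₁ (w₁' x) x)
    (hw₁' : ContinuousOn w₁' (Icc a c))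
    (h₂ : EqOn ξ w₂ (Icc c b)) (hw₂ : ∀ x ∈ Icc c b, HasDerivAt w₂ (w₂' x) x)
    (hw₂' : ContinuousOn w₂' (Icc c b)) :
    PiecewiseC1On ξ a b := by
  refine ⟨?_, {a, c, b}, fun x hx hxS => ?_⟩
  · rw [← Icc_union_Icc_eq_Icc hac hcb]
    exact ((HasDerivAt.continuousOn hw₁).congr h₁).union_of_isClosed
      ((HasDerivAt.continuousOn hw₂).congr h₂) isClosed_Icc isClosed_Icc
  simp only [Finset.mem_insert, Finset.mem_singleton, not_or] at hxS
  obtain ⟨hxa, hxc, hxb⟩ := hxS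
  rcases Ne.lt_or_gt hxc with hlt | hgt
  · exact differentiableAt_and_continuousAt_deriv_of_eqOn h₁ hw₁ hw₁'
      ⟨hx.1.lt_of_ne' hxa, hlt⟩
  · exact differentiableAt_and_continuousAt_deriv_of_eqOn h₂ hw₂ hw₂'
      ⟨hgt, hx.2.lt_of_ne hxb⟩

noncomputable def energyDensity (f g w w' : ℝ → ℝ) (r : ℝ) : ℝ :=
  f r * w' r ^ 2 + g r * w r ^ 2

noncomputable def energyIntegral (f g : ℝ → ℝ) (a b : ℝ) (w w' : ℝ → ℝ) : ℝ :=
  ∫ r in a..b, energyDensity f g w w' r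

lemma energyW_eq_energyIntegral (f g : ℝ → ℝ) (a b : ℝ) (ξ : ℝ → ℝ) :
    energyW f g a b ξ = Real.pi / 2 * energyIntegral f g a b ξ (deriv ξ) :=
  rfl

section Energy

variable {f g : ℝ → ℝ} {a b c : ℝ}

lemma intervalIntegrable_energyDensity {w w' : ℝ → ℝ} (hab : a ≤ b)
    (hf : ContinuousOn f (Icc a b)) (hg : ContinuousOn g (Icc a b))
    (hw : ContinuousOn w (Icc a b)) (hw' : ContinuousOn w' (Icc a b)) :
    IntervalIntegrable (energyDensity f g w w') volume a b :=
  ((hf.mul (hw'.pow 2)).add (hg.mul (hw.pow 2))).intervalIntegrable_of_Icc hab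

lemma energyIntegral_const_mul (ε : ℝ) (w w' : ℝ → ℝ) :
    energyIntegral f g a b (fun r => ε * w r) (fun r => ε * w' r)
      = ε ^ 2 * energyIntegral f g a b w w' := by
  rw [energyIntegral, energyIntegral, ← intervalIntegral.integral_const_mul]
  congr 1 with r
  simp only [energyDensity]
  ring

lemma energyIntegral_add_adjacent {w w' : ℝ → ℝ} (hac : a ≤ c) (hcb : c ≤ b)
    (hf : ContinuousOn f (Icc a b)) (hg : ContinuousOn g (Icc a b))
    (hw : ContinuousOn w (Icc a b)) (hw' : ContinuousOn w' (Icc a b)) :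
    energyIntegral f g a c w w' + energyIntegral f g c b w w' = energyIntegral f g a b w w' := by
  have hac' : Icc a c ⊆ Icc a b := Icc_subset_Icc_right hcb
  have hcb' : Icc c b ⊆ Icc a b := Icc_subset_Icc_left hac
  exact integral_add_adjacent_intervals
    (intervalIntegrable_energyDensity hac (hf.mono hac') (hg.mono hac') (hw.mono hac')
      (hw'.mono hac'))
    (intervalIntegrable_energyDensity hcb (hf.mono hcb') (hg.mono hcb') (hw.mono hcb')
      (hw'.mono hcb'))

lemma energyDensity_deriv_eqOn {ξ w w' : ℝ → ℝ} (h : EqOn ξ w (Icc a b))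
    (hw : ∀ x ∈ Ioo a b, HasDerivAt w (w' x) x) :
    EqOn (energyDensity f g ξ (deriv ξ)) (energyDensity f g w w') (Ioo a b) := fun x hx => by
  simp only [energyDensity, (hasDerivAt_of_eqOn_Icc h hx (hw x hx)).deriv,
    h (Ioo_subset_Icc_self hx)]

lemma energyIntegral_deriv_eq_of_eqOn {ξ w w' : ℝ → ℝ} (hab : a ≤ b) (h : EqOn ξ w (Icc a b))
    (hw : ∀ x ∈ Ioo a b, HasDerivAt w (w' x) x) :
    energyIntegral f g a b ξ (deriv ξ) = energyIntegral f g a b w w' :=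
  integral_congr_Ioo_of_le hab (energyDensity_deriv_eqOn h hw)

lemma energyIntegral_deriv_eq_add_of_eqOn {ξ w₁ w₁' w₂ w₂' : ℝ → ℝ} (hac : a ≤ c) (hcb : c ≤ b)
    (hf : ContinuousOn f (Icc a b)) (hg : ContinuousOn g (Icc a b))
    (h₁ : EqOn ξ w₁ (Icc a c)) (hw₁ : ∀ x ∈ Icc a c, HasDerivAt w₁ (w₁' x) x)
    (hw₁' : ContinuousOn w₁' (Icc a c))
    (h₂ : EqOn ξ w₂ (Icc c b)) (hw₂ : ∀ x ∈ Icc c b, HasDerivAt w₂ (w₂' x) x)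
    (hw₂' : ContinuousOn w₂' (Icc c b)) :
    energyIntegral f g a b ξ (deriv ξ)
      = energyIntegral f g a c w₁ w₁' + energyIntegral f g c b w₂ w₂' := by
  have hw₁o : ∀ x ∈ Ioo a c, HasDerivAt w₁ (w₁' x) x := fun x hx => hw₁ x (Ioo_subset_Icc_self hx)
  have hw₂o : ∀ x ∈ Ioo c b, HasDerivAt w₂ (w₂' x) x := fun x hx => hw₂ x (Ioo_subset_Icc_self hx)
  have hac' : Icc a c ⊆ Icc a b := Icc_subset_Icc_right hcb
  have hcb' : Icc c b ⊆ Icc a b := Icc_subset_Icc_left hac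
  have hint₁ : IntervalIntegrable (energyDensity f g ξ (deriv ξ)) volume a c :=
    (intervalIntegrable_energyDensity hac (hf.mono hac') (hg.mono hac')
      (HasDerivAt.continuousOn hw₁) hw₁').congr_uIoo
      (uIoo_of_le hac ▸ (energyDensity_deriv_eqOn h₁ hw₁o).symm)
  have hint₂ : IntervalIntegrable (energyDensity f g ξ (deriv ξ)) volume c b :=
    (intervalIntegrable_energyDensity hcb (hf.mono hcb') (hg.mono hcb')
      (HasDerivAt.continuousOn hw₂) hw₂').congr_uIoo
      (uIoo_of_le hcb ▸ (energyDensity_deriv_eqOn h₂ hw₂o).symm)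
  rw [energyIntegral, ← integral_add_adjacent_intervals hint₁ hint₂]
  exact congr_arg₂ (· + ·) (energyIntegral_deriv_eq_of_eqOn hac h₁ hw₁o)
    (energyIntegral_deriv_eq_of_eqOn hcb h₂ hw₂o)

end Energy

namespace SolvesEulerLagrange

variable {f g u u' : ℝ → ℝ} {a b : ℝ}

lemma mono (hu : SolvesEulerLagrange f g a b u u') {c d : ℝ} (h : Icc c d ⊆ Icc a b) :
    SolvesEulerLagrange f g c d u u' :=
  ⟨fun r hr => hu.1 r (h hr), fun r hr => hu.2 r (h hr)⟩

lemma continuousOn (hu : SolvesEulerLagrange f g a b u u') : ContinuousOn u (Icc a b) :=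
  HasDerivAt.continuousOn hu.1

lemma continuousOn_deriv (hu : SolvesEulerLagrange f g a b u u') (hf : ContinuousOn f (Icc a b))
    (hf0 : ∀ r ∈ Icc a b, f r ≠ 0) : ContinuousOn u' (Icc a b) :=
  ((HasDerivAt.continuousOn hu.2).div hf hf0).congr fun r hr =>
    (mul_div_cancel_left₀ _ (hf0 r hr)).symm

/-- Uniqueness for the first-order system satisfied by `(u, f u')`. -/
lemma eqOn_zero_of_deriv_eq_zero (hu : SolvesEulerLagrange f g a b u u')
    (hf : ContinuousOn f (Icc a b)) (hg : ContinuousOn g (Icc a b))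
    (hf0 : ∀ r ∈ Icc a b, f r ≠ 0) {t₀ : ℝ} (ht₀ : t₀ ∈ Ioo a b) (h0 : u t₀ = 0)
    (h0' : u' t₀ = 0) : EqOn u 0 (Icc a b) := by
  obtain ⟨M, hM⟩ := isCompact_Icc.exists_bound_of_continuousOn ((hf.inv₀ hf0).prodMk hg)
  have hlip : ∀ t ∈ Ioo a b, LipschitzOnWith M.toNNReal
      (fun y : ℝ × ℝ => ((f t)⁻¹ * y.2, g t * y.1)) univ := fun t ht => by
    have hMt := hM t (Ioo_subset_Icc_self ht)
    refine (lipschitzWith_mul_snd_mul_fst ?_ ?_).lipschitzOnWith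
    · exact ((norm_fst_le _).trans hMt).trans (Real.le_coe_toNNReal M)
    · exact ((norm_snd_le _).trans hMt).trans (Real.le_coe_toNNReal M)
  have hsol : ∀ t ∈ Ioo a b, HasDerivAt (fun t => (u t, f t * u' t))
      ((f t)⁻¹ * (f t * u' t), g t * u t) t := fun t ht => by
    have htI := Ioo_subset_Icc_self ht
    rw [inv_mul_cancel_left₀ (hf0 t htI)]
    exact (hu.1 t htI).prodMk (hu.2 t htI)
  have key := ODE_solution_unique_of_mem_Icc (g := 0) hlip ht₀
    (hu.continuousOn.prodMk (HasDerivAt.continuousOn hu.2)) hsol (fun _ _ => mem_univ _)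
    continuousOn_const (fun t _ => by
      simpa only [Pi.zero_apply, Prod.fst_zero, Prod.snd_zero, mul_zero, Prod.mk_zero_zero]
        using hasDerivAt_zero (F := ℝ × ℝ) (x := t))
    (fun _ _ => mem_univ _) (by simp [h0, h0'])
  exact fun t ht => congr_arg Prod.fst (key ht)

lemma integral_pairing (hab : a ≤ b) (hu : SolvesEulerLagrange f g a b u u') {ψ ψ' : ℝ → ℝ}
    (hψ : ∀ r ∈ Icc a b, HasDerivAt ψ (ψ' r) r)
    (hint : IntervalIntegrable (fun r => f r * u' r * ψ' r + g r * u r * ψ r) volume a b) :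
    ∫ r in a..b, (f r * u' r * ψ' r + g r * u r * ψ r)
      = f b * u' b * ψ b - f a * u' a * ψ a := by
  refine integral_eq_sub_of_hasDerivAt (f := fun s => f s * u' s * ψ s) (fun r hr => ?_) hint
  rw [uIcc_of_le hab] at hr
  rw [add_comm]
  exact (hu.2 r hr).mul (hψ r hr)

lemma energyIntegral_eq (hab : a ≤ b) (hu : SolvesEulerLagrange f g a b u u')
    (hf : ContinuousOn f (Icc a b)) (hg : ContinuousOn g (Icc a b))
    (hu' : ContinuousOn u' (Icc a b)) :
    energyIntegral f g a b u u' = f b * u' b * u b - f a * u' a * u a := by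
  have hint : IntervalIntegrable (fun r => f r * u' r * u' r + g r * u r * u r) volume a b :=
    ContinuousOn.intervalIntegrable_of_Icc hab
      (((hf.mul hu').mul hu').add ((hg.mul hu.continuousOn).mul hu.continuousOn))
  rw [energyIntegral, ← hu.integral_pairing hab hu.1 hint]
  congr 1 with r
  simp only [energyDensity]
  ring

lemma energyIntegral_add (hab : a ≤ b) (hu : SolvesEulerLagrange f g a b u u')
    (hf : ContinuousOn f (Icc a b)) (hg : ContinuousOn g (Icc a b))
    (hu' : ContinuousOn u' (Icc a b)) {η η' : ℝ → ℝ} (hη : ∀ r ∈ Icc a b, HasDerivAt η (η' r) r)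
    (hη' : ContinuousOn η' (Icc a b)) :
    energyIntegral f g a b (u + η) (u' + η')
      = energyIntegral f g a b u u' + 2 * (f b * u' b * η b - f a * u' a * η a)
        + energyIntegral f g a b η η' := by
  have hηc : ContinuousOn η (Icc a b) := HasDerivAt.continuousOn hη
  have hcross : IntervalIntegrable (fun r => f r * u' r * η' r + g r * u r * η r) volume a b :=
    (((hf.mul hu').mul hη').add ((hg.mul hu.continuousOn).mul hηc)).intervalIntegrable_of_Icc hab
  have hu₀ := intervalIntegrable_energyDensity hab hf hg hu.continuousOn hu'
  have hη₀ := intervalIntegrable_energyDensity hab hf hg hηc hη'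
  rw [← hu.integral_pairing hab hη hcross, energyIntegral, energyIntegral, energyIntegral,
    ← intervalIntegral.integral_const_mul, ← integral_add hu₀ (hcross.const_mul 2),
    ← integral_add (hu₀.add (hcross.const_mul 2)) hη₀]
  congr 1 with r
  simp only [energyDensity, Pi.add_apply]
  ring

end SolvesEulerLagrange

/-- `u (min r c)` is `u` stopped at `c`; when `u c = 0` this is `u` on `r ≤ c` and `0` after. -/
def newcombTrial (w u ψ : ℝ → ℝ) (c ε : ℝ) (r : ℝ) : ℝ :=
  w r + u (min r c) + ε * ψ r

section NewcombTrial

variable {f g w w' u u' ψ ψ' : ℝ → ℝ} {a b c ε : ℝ}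

lemma newcombTrial_eqOn_Iic :
    EqOn (newcombTrial w u ψ c ε) (w + (u + fun r => ε * ψ r)) (Iic c) := fun r hr => by
  simp only [newcombTrial, min_eq_left (mem_Iic.mp hr), Pi.add_apply, add_assoc]

lemma newcombTrial_eqOn_Ici (huc : u c = 0) :
    EqOn (newcombTrial w u ψ c ε) (w + fun r => ε * ψ r) (Ici c) := fun r hr => by
  simp only [newcombTrial, min_eq_right (mem_Ici.mp hr), huc, add_zero, Pi.add_apply]

lemma piecewiseC1On_newcombTrial (hac : a ≤ c) (hcb : c ≤ b)
    (hw : ∀ r ∈ Icc a b, HasDerivAt w (w' r) r) (hw' : ContinuousOn w' (Icc a b))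
    (hu : ∀ r ∈ Icc a c, HasDerivAt u (u' r) r) (hu' : ContinuousOn u' (Icc a c)) (huc : u c = 0)
    (hψ : ∀ r ∈ Icc a b, HasDerivAt ψ (ψ' r) r) (hψ' : ContinuousOn ψ' (Icc a b)) :
    PiecewiseC1On (newcombTrial w u ψ c ε) a b := by
  have hac' : Icc a c ⊆ Icc a b := Icc_subset_Icc_right hcb
  have hcb' : Icc c b ⊆ Icc a b := Icc_subset_Icc_left hac
  refine piecewiseC1On_of_eqOn hac hcb (newcombTrial_eqOn_Iic.mono Icc_subset_Iic_self)
    (w₁' := w' + (u' + fun r => ε * ψ' r))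
    (fun r hr => (hw r (hac' hr)).add ((hu r hr).add ((hψ r (hac' hr)).const_mul ε)))
    ((hw'.mono hac').add (hu'.add ((hψ'.mono hac').const_smul ε)))
    ((newcombTrial_eqOn_Ici huc).mono Icc_subset_Ici_self)
    (w₂' := w' + fun r => ε * ψ' r)
    (fun r hr => (hw r (hcb' hr)).add ((hψ r (hcb' hr)).const_mul ε))
    ((hw'.mono hcb').add ((hψ'.mono hcb').const_smul ε))

lemma energyIntegral_newcombTrial (hac : a ≤ c) (hcb : c ≤ b)
    (hf : ContinuousOn f (Icc a b)) (hg : ContinuousOn g (Icc a b))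
    (hw : SolvesEulerLagrange f g a b w w') (hw' : ContinuousOn w' (Icc a b))
    (hu : SolvesEulerLagrange f g a c u u') (hu' : ContinuousOn u' (Icc a c))
    (hua : u a = 0) (huc : u c = 0)
    (hψ : ∀ r ∈ Icc a b, HasDerivAt ψ (ψ' r) r) (hψ' : ContinuousOn ψ' (Icc a b))
    (hψa : ψ a = 0) (hψb : ψ b = 0) :
    energyIntegral f g a b (newcombTrial w u ψ c ε) (deriv (newcombTrial w u ψ c ε))
      = energyIntegral f g a b w w' + 2 * ε * (f c * u' c * ψ c)
        + ε ^ 2 * energyIntegral f g a b ψ ψ' := by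
  have hac' : Icc a c ⊆ Icc a b := Icc_subset_Icc_right hcb
  have hcb' : Icc c b ⊆ Icc a b := Icc_subset_Icc_left hac
  have hεψ : ∀ r ∈ Icc a b, HasDerivAt (fun r => ε * ψ r) (ε * ψ' r) r := fun r hr =>
    (hψ r hr).const_mul ε
  have hεψ' : ContinuousOn (fun r => ε * ψ' r) (Icc a b) := hψ'.const_smul ε
  have hη : ∀ r ∈ Icc a c, HasDerivAt (u + fun r => ε * ψ r) ((u' + fun r => ε * ψ' r) r) r :=
    fun r hr => (hu.1 r hr).add (hεψ r (hac' hr))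
  rw [energyIntegral_deriv_eq_add_of_eqOn hac hcb hf hg
      (w₁' := w' + (u' + fun r => ε * ψ' r)) (w₂' := w' + fun r => ε * ψ' r)
      (newcombTrial_eqOn_Iic.mono Icc_subset_Iic_self)
      (fun r hr => (hw.1 r (hac' hr)).add (hη r hr))
      ((hw'.mono hac').add (hu'.add (hεψ'.mono hac')))
      ((newcombTrial_eqOn_Ici huc).mono Icc_subset_Ici_self)
      (fun r hr => (hw.1 r (hcb' hr)).add (hεψ r (hcb' hr)))
      ((hw'.mono hcb').add (hεψ'.mono hcb')),
    (hw.mono hac').energyIntegral_add hac (hf.mono hac') (hg.mono hac') (hw'.mono hac') hη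
      (hu'.add (hεψ'.mono hac')),
    hu.energyIntegral_add hac (hf.mono hac') (hg.mono hac') hu'
      (fun r hr => hεψ r (hac' hr)) (hεψ'.mono hac'),
    hu.energyIntegral_eq hac (hf.mono hac') (hg.mono hac') hu',
    (hw.mono hcb').energyIntegral_add hcb (hf.mono hcb') (hg.mono hcb') (hw'.mono hcb')
      (fun r hr => hεψ r (hcb' hr)) (hεψ'.mono hcb'),
    energyIntegral_const_mul, energyIntegral_const_mul,
    ← energyIntegral_add_adjacent hac hcb hf hg hw.continuousOn hw',
    ← energyIntegral_add_adjacent hac hcb hf hg (HasDerivAt.continuousOn hψ) hψ']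
  simp only [Pi.add_apply, hua, huc, hψa, hψb]
  ring

end NewcombTrial

theorem newcomb_theorem_general
    (r₁ r₂ : ℝ) (f g : ℝ → ℝ)
    (hf : ContinuousOn f (Set.Icc r₁ r₂)) (hg : ContinuousOn g (Set.Icc r₁ r₂))
    (hfpos : ∀ r ∈ Set.Icc r₁ r₂, 0 < f r)
    -- a nontrivial Euler–Lagrange solution vanishing at `r₁` and at an interior point `r₀`:
    (u u' : ℝ → ℝ)
    (hu : SolvesEulerLagrange f g r₁ r₂ u u')
    (hu_nontriv : ∃ r ∈ Set.Icc r₁ r₂, u r ≠ 0)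
    (hu1 : u r₁ = 0)
    (r₀ : ℝ) (hr₀ : r₀ ∈ Set.Ioo r₁ r₂) (hu0 : u r₀ = 0) :
    -- then for every C² solution `ξ₀` of the Euler–Lagrange equation:
    ∀ ξ₀ ξ₀' ξ₀'' : ℝ → ℝ,
      SolvesEulerLagrange f g r₁ r₂ ξ₀ ξ₀' →
      (∀ r ∈ Set.Icc r₁ r₂, HasDerivAt ξ₀' (ξ₀'' r) r) →
      ContinuousOn ξ₀'' (Set.Icc r₁ r₂) →
      ∃ ξ : ℝ → ℝ, PiecewiseC1On ξ r₁ r₂ ∧ ξ r₁ = ξ₀ r₁ ∧ ξ r₂ = ξ₀ r₂ ∧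
        energyW f g r₁ r₂ ξ < energyW f g r₁ r₂ ξ₀ := by
  intro ξ₀ ξ₀' _ hξ₀ _ _
  obtain ⟨hr₁₀, hr₀₂⟩ := hr₀
  have hf0 : ∀ r ∈ Icc r₁ r₂, f r ≠ 0 := fun r hr => (hfpos r hr).ne'
  have hr₀I : Icc r₁ r₀ ⊆ Icc r₁ r₂ := Icc_subset_Icc_right hr₀₂.le
  have hu'₀ : u' r₀ ≠ 0 := fun h => by
    obtain ⟨r, hr, hne⟩ := hu_nontriv
    exact hne (hu.eqOn_zero_of_deriv_eq_zero hf hg hf0 ⟨hr₁₀, hr₀₂⟩ hu0 h hr)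
  set ψ : ℝ → ℝ := fun r => (r - r₁) * (r₂ - r)
  set ψ' : ℝ → ℝ := fun r => r₁ + r₂ - 2 * r
  have hψ : ∀ r, HasDerivAt ψ (ψ' r) r := fun r => by
    have h := ((hasDerivAt_id' r).sub_const r₁).mul ((hasDerivAt_id' r).const_sub r₂)
    exact h.congr_deriv (by simp only [ψ']; ring)
  have hC : f r₀ * u' r₀ * ψ r₀ ≠ 0 :=
    mul_ne_zero (mul_ne_zero (hf0 r₀ ⟨hr₁₀.le, hr₀₂.le⟩) hu'₀)
      (mul_pos (sub_pos.mpr hr₁₀) (sub_pos.mpr hr₀₂)).ne'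
  obtain ⟨ε, hε⟩ := exists_two_mul_mul_add_sq_mul_neg hC (energyIntegral f g r₁ r₂ ψ ψ')
  have hξ₀' := hξ₀.continuousOn_deriv hf hf0
  have hu' := (hu.continuousOn_deriv hf hf0).mono hr₀I
  refine ⟨newcombTrial ξ₀ u ψ r₀ ε,
    piecewiseC1On_newcombTrial hr₁₀.le hr₀₂.le hξ₀.1 hξ₀' (fun r hr => hu.1 r (hr₀I hr)) hu' hu0
      (fun r _ => hψ r) (by fun_prop),
    by simp [newcombTrial, hr₁₀.le, hu1, ψ], by simp [newcombTrial, hr₀₂.le, hu0, ψ], ?_⟩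
  rw [energyW_eq_energyIntegral, energyW_eq_energyIntegral,
    energyIntegral_newcombTrial hr₁₀.le hr₀₂.le hf hg hξ₀ hξ₀' (hu.mono hr₀I) hu' hu1 hu0
      (fun r _ => hψ r) (by fun_prop) (by simp [ψ]) (by simp [ψ]),
    energyIntegral_deriv_eq_of_eqOn (hr₁₀.trans hr₀₂).le (eqOn_refl ξ₀ _)
      (fun r hr => hξ₀.1 r (Ioo_subset_Icc_self hr))]
  gcongr
  linarith

/-- **Newcomb's Theorem.**  If a nontrivial solution of the marginal-stability
Euler–Lagrange equation vanishing at `r₁` vanishes again at an interior point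
`r₀ ∈ (r₁, r₂)`, then every C² Euler–Lagrange solution `ξ₀` can be beaten: there is
a continuous, piecewise continuously differentiable `ξ` with the same boundary values
and strictly smaller energy `W`. -/
theorem newcomb_theorem
    (r₁ r₂ : ℝ) (hr : r₁ < r₂) (f g : ℝ → ℝ)
    (hf : ContinuousOn f (Set.Icc r₁ r₂)) (hg : ContinuousOn g (Set.Icc r₁ r₂))
    (hfpos : ∀ r ∈ Set.Icc r₁ r₂, 0 < f r)
    -- a nontrivial Euler–Lagrange solution vanishing at `r₁` and at an interior point `r₀`:
    (u u' : ℝ → ℝ)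
    (hu : SolvesEulerLagrange f g r₁ r₂ u u')
    (hu_nontriv : ∃ r ∈ Set.Icc r₁ r₂, u r ≠ 0)
    (hu1 : u r₁ = 0)
    (r₀ : ℝ) (hr₀ : r₀ ∈ Set.Ioo r₁ r₂) (hu0 : u r₀ = 0) :
    -- then for every C² solution `ξ₀` of the Euler–Lagrange equation:
    ∀ ξ₀ ξ₀' ξ₀'' : ℝ → ℝ,
      SolvesEulerLagrange f g r₁ r₂ ξ₀ ξ₀' →
      (∀ r ∈ Set.Icc r₁ r₂, HasDerivAt ξ₀' (ξ₀'' r) r) →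
      ContinuousOn ξ₀'' (Set.Icc r₁ r₂) →
      ∃ ξ : ℝ → ℝ, PiecewiseC1On ξ r₁ r₂ ∧ ξ r₁ = ξ₀ r₁ ∧ ξ r₂ = ξ₀ r₂ ∧
        energyW f g r₁ r₂ ξ < energyW f g r₁ r₂ ξ₀ :=
  newcomb_theorem_general r₁ r₂ f g hf hg hfpos u u' hu hu_nontriv hu1 r₀ hr₀ hu0
end

section
/- Let u : ℝ → ℝ be C¹ with curvature 1/R_c(l) := u'(l), let R_s(l) = R₀ + ∫₀^l cos u(t) dt with R_s(l) > 0, and set R(ρ, l) = R_s(l) + ρ sin u(l). Let p, F : ℝ → ℝ be C¹ and suppose ψ : [0, ε) × ℝ → ℝ is C² and satisfies the Grad–Shafranov equation in Mercier–Luc coordinates, ( R/(1+ρ/R_c) ) [ ∂_l( ((1+ρ/R_c)/R) ∂_l ψ ) + ∂_ρ( ((1+ρ/R_c)/R) ∂_ρ ψ ) ] = −R² p'(ψ) − F(ψ) F'(ψ), with ψ(0, l) = ψ₀ constant in l and ∂_ρψ(0, l) = −R_s(l) B_{ps}(l) for a function B_{ps}. Then the second-order coefficient ψ₂(l) := (1/2)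 ∂²_ρ ψ(0, l) of the radial Taylor expansion ψ = ψ₀ + ρψ₁ + ρ²ψ₂ + O(ρ³) is given by ψ₂(l) = −(1/2) [ R_s B_{ps} ( sin u / R_s − 1/R_c ) + R_s² p'(ψ₀) + F(ψ₀) F'(ψ₀) ]. (Equation (C.9); units with μ₀ = 1.) -/
/-!
On the surface `ρ = 0` the flux `ψ` is constant in `l`, so `∂_l ψ` vanishes along the whole
surface and so does the `l`-derivative of the tangential term `((1+ρ/R_c)/R) ∂_l ψ`. The radial
term is, by the product rule, `∂_ρ((1+ρ/R_c)/R) ψ₁ + ∂²_ρψ / R_s`, and since `∂_ρ R = sin u`,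
`∂_ρ((1+ρ/R_c)/R) = 1/(R_c R_s) − sin u / R_s²` at `ρ = 0`. The Grad–Shafranov equation at
`ρ = 0` is then linear in `∂²_ρψ`, and solving it gives `ψ₂`.
-/
open Asymptotics ContinuousLinearMap Filter Topology

section Calculus

variable {𝕜 E F : Type*} [NontriviallyNormedField 𝕜] [NormedAddCommGroup E] [NormedSpace 𝕜 E]
  [NormedAddCommGroup F] [NormedSpace 𝕜 F]

/-- Only continuity of `g` is needed, because the factor `q.1` vanishes at the base point; this is
what makes the Mercier–Luc weight differentiable on the surface when `1/R_c` is merely continuous. -/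
theorem hasFDerivAt_fst_smul_comp_snd {g : E → F} {x : E} (hg : ContinuousAt g x) :
    HasFDerivAt (fun q : 𝕜 × E => q.1 • g q.2) ((fst 𝕜 𝕜 E).smulRight (g x)) (0, x) := by
  rw [hasFDerivAt_iff_isLittleO_nhds_zero]
  have hfst : (fun h : 𝕜 × E => h.1) =O[𝓝 0] fun h => ‖h‖ :=
    .of_bound 1 (.of_forall fun h => by simpa using norm_fst_le h)
  have hincr : (fun h : 𝕜 × E => g (x + h.2) - g x) =o[𝓝 0] fun _ => (1 : ℝ) := by
    rw [isLittleO_one_iff, tendsto_sub_nhds_zero_iff]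
    exact hg.tendsto.comp ((continuous_const.add continuous_snd).tendsto' (0 : 𝕜 × E) x (by simp))
  refine ((hfst.smul_isLittleO hincr).congr (fun h => ?_) (fun h => ?_)).of_norm_right
  · simp [smul_sub]
  · simp

variable {f : E → F} {s : Set E} {x v : E}

theorem fderivWithin_apply_eq_zero_of_const_on_line (hs : ∀ t : 𝕜, x + t • v ∈ s)
    (hf : ∀ t : 𝕜, f (x + t • v) = f x) : fderivWithin 𝕜 f s x v = 0 := by
  by_cases hdiff : DifferentiableWithinAt 𝕜 f s x
  · have hline : HasDerivAt (fun t : 𝕜 => x + t • v) v 0 := by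
      simpa using ((hasDerivAt_id (0 : 𝕜)).smul_const v).const_add x
    have hfx : HasFDerivWithinAt f (fderivWithin 𝕜 f s x) s (x + (0 : 𝕜) • v) := by
      simpa using hdiff.hasFDerivWithinAt
    have hcomp := hfx.comp_hasDerivWithinAt (0 : 𝕜) hline.hasDerivWithinAt
      (s := Set.univ) (fun t _ => hs t)
    rw [hasDerivWithinAt_univ, show f ∘ (fun t : 𝕜 => x + t • v) = fun _ => f x from funext hf]
      at hcomp
    exact hcomp.unique (hasDerivAt_const _ _)
  · simp [fderivWithin_zero_of_not_differentiableWithinAt hdiff]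

theorem fderivWithin_mul_fderivWithin_apply_eq_zero_of_const_on_line {f w : E → 𝕜}
    (hs : ∀ t : 𝕜, x + t • v ∈ s) (hf : ∀ t : 𝕜, f (x + t • v) = f x) :
    fderivWithin 𝕜 (fun y => w y * fderivWithin 𝕜 f s y v) s x v = 0 := by
  have hshift (t t' : 𝕜) : x + t • v + t' • v = x + (t + t') • v := by
    rw [add_smul, add_assoc]
  refine fderivWithin_apply_eq_zero_of_const_on_line hs fun t => ?_
  have hflux (t : 𝕜) : fderivWithin 𝕜 f s (x + t • v) v = 0 :=
    fderivWithin_apply_eq_zero_of_const_on_line (fun t' => hshift t t' ▸ hs _)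
      fun t' => by rw [hshift, hf, hf]
  have hflux₀ := hflux 0
  rw [zero_smul, add_zero] at hflux₀
  rw [hflux, hflux₀, mul_zero, mul_zero]

end Calculus

section MercierLucWeight

variable {κ σ Rs : ℝ → ℝ} {l : ℝ}

theorem differentiableAt_mercierLuc_weight (hκ : ContinuousAt κ l) (hσ : ContinuousAt σ l)
    (hRs : DifferentiableAt ℝ Rs l) (hRs0 : Rs l ≠ 0) :
    DifferentiableAt ℝ (fun q : ℝ × ℝ => (1 + q.1 * κ q.2) / (Rs q.2 + q.1 * σ q.2)) (0, l) := by
  have hnum : DifferentiableAt ℝ (fun q : ℝ × ℝ => 1 + q.1 * κ q.2) (0, l) :=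
    (hasFDerivAt_fst_smul_comp_snd hκ).differentiableAt.const_add 1
  have hden : DifferentiableAt ℝ (fun q : ℝ × ℝ => Rs q.2 + q.1 * σ q.2) (0, l) :=
    (hRs.comp (0, l) differentiableAt_snd).add (hasFDerivAt_fst_smul_comp_snd hσ).differentiableAt
  simpa only [div_eq_mul_inv] using hnum.fun_mul (hden.fun_inv (by simpa using hRs0))

theorem fderiv_mercierLuc_weight_apply_fst (hκ : ContinuousAt κ l) (hσ : ContinuousAt σ l)
    (hRs : DifferentiableAt ℝ Rs l) (hRs0 : Rs l ≠ 0) :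
    fderiv ℝ (fun q : ℝ × ℝ => (1 + q.1 * κ q.2) / (Rs q.2 + q.1 * σ q.2)) (0, l) (1, 0) =
      κ l / Rs l - σ l / Rs l ^ 2 := by
  have hradial : HasDerivAt (fun t : ℝ => (1 + t * κ l) / (Rs l + t * σ l))
      (κ l / Rs l - σ l / Rs l ^ 2) 0 := by
    refine ((((hasDerivAt_id' (0 : ℝ)).mul_const (κ l)).const_add 1).fun_div
      (((hasDerivAt_id' (0 : ℝ)).mul_const (σ l)).const_add (Rs l))
        (by simpa using hRs0)).congr_deriv ?_
    simp only [zero_mul, add_zero, one_mul]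
    field_simp
  rw [← (differentiableAt_mercierLuc_weight hκ hσ hRs hRs0).lineDeriv_eq_fderiv, lineDeriv]
  simpa using hradial.deriv

theorem fderivWithin_mercierLuc_weight_mul_apply_fst {g : ℝ × ℝ → ℝ} {S : Set (ℝ × ℝ)}
    (hS : UniqueDiffWithinAt ℝ S (0, l)) (hg : DifferentiableWithinAt ℝ g S (0, l))
    (hκ : ContinuousAt κ l) (hσ : ContinuousAt σ l)
    (hRs : DifferentiableAt ℝ Rs l) (hRs0 : Rs l ≠ 0) :
    fderivWithin ℝ (fun q => (1 + q.1 * κ q.2) / (Rs q.2 + q.1 * σ q.2) * g q) S (0, l) (1, 0) =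
      (κ l / Rs l - σ l / Rs l ^ 2) * g (0, l) + fderivWithin ℝ g S (0, l) (1, 0) / Rs l := by
  have hw := differentiableAt_mercierLuc_weight hκ hσ hRs hRs0
  rw [fderivWithin_fun_mul hS hw.differentiableWithinAt hg, hw.fderivWithin hS]
  simp only [add_apply, smul_apply, smul_eq_mul, fderiv_mercierLuc_weight_apply_fst hκ hσ hRs hRs0]
  simp only [zero_mul, add_zero, div_eq_mul_inv, one_mul]
  ring

end MercierLucWeight

theorem ContDiffOn.differentiableWithinAt_fderivWithin_apply {𝕜 E F : Type*}
    [NontriviallyNormedField 𝕜] [NormedAddCommGroup E] [NormedSpace 𝕜 E]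
    [NormedAddCommGroup F] [NormedSpace 𝕜 F] {f : E → F} {s : Set E} {x : E}
    (hf : ContDiffOn 𝕜 2 f s) (hs : UniqueDiffOn 𝕜 s) (hx : x ∈ s) (v : E) :
    DifferentiableWithinAt 𝕜 (fun y => fderivWithin 𝕜 f s y v) s x :=
  (((hf.fderivWithin hs (by norm_num)) x hx).differentiableWithinAt one_ne_zero).clm_apply
    (differentiableWithinAt_const v)

theorem grad_shafranov_second_order_coefficient_general
    (u : ℝ → ℝ) (hu : ContDiff ℝ 1 u)
    (R₀ : ℝ) (Rs : ℝ → ℝ)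
    (hRs : Rs = fun l => R₀ + ∫ t in (0 : ℝ)..l, Real.cos (u t))
    (hRspos : ∀ l : ℝ, 0 < Rs l)
    (Rf : ℝ × ℝ → ℝ) (hRf : Rf = fun q => Rs q.2 + q.1 * Real.sin (u q.2))
    (p F : ℝ → ℝ)
    (ε : ℝ) (hε : 0 < ε)
    (S : Set (ℝ × ℝ)) (hS : S = Set.Ico (0 : ℝ) ε ×ˢ (Set.univ : Set ℝ))
    (ψ : ℝ × ℝ → ℝ) (hψ : ContDiffOn ℝ 2 ψ S)
    -- the Grad–Shafranov equation in Mercier–Luc coordinates: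
    (hGS : ∀ q ∈ S,
      (Rf q / (1 + q.1 * deriv u q.2)) *
        (fderivWithin ℝ
            (fun q' => ((1 + q'.1 * deriv u q'.2) / Rf q') *
              fderivWithin ℝ ψ S q' (0, 1)) S q (0, 1) +
         fderivWithin ℝ
            (fun q' => ((1 + q'.1 * deriv u q'.2) / Rf q') *
              fderivWithin ℝ ψ S q' (1, 0)) S q (1, 0)) =
        -(Rf q) ^ 2 * deriv p (ψ q) - F (ψ q) * deriv F (ψ q))
    -- on-surface data: `ψ(0, l) = ψ₀` and `∂_ρψ(0, l) = −R_s B_{ps}`: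
    (ψ₀ : ℝ) (hψ0 : ∀ l : ℝ, ψ (0, l) = ψ₀)
    (Bps : ℝ → ℝ)
    (hψ1 : ∀ l : ℝ, fderivWithin ℝ ψ S (0, l) (1, 0) = -(Rs l * Bps l)) :
    ∀ l : ℝ,
      (1 / 2) * fderivWithin ℝ (fun q => fderivWithin ℝ ψ S q (1, 0)) S (0, l) (1, 0) =
        -(1 / 2) * (Rs l * Bps l * (Real.sin (u l) / Rs l - deriv u l) +
          (Rs l) ^ 2 * deriv p ψ₀ + F ψ₀ * deriv F ψ₀) := by
  intro l
  subst hRf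
  beta_reduce at hGS
  have hsurf (t : ℝ) : ((0 : ℝ), l) + t • ((0 : ℝ), (1 : ℝ)) ∈ S := by
    simp [hS, hε]
  have hUD : UniqueDiffOn ℝ S := hS ▸ (uniqueDiffOn_Ico 0 ε).prod uniqueDiffOn_univ
  have hRsd : DifferentiableAt ℝ Rs l := by
    have hcos : Continuous fun t => Real.cos (u t) := Real.continuous_cos.comp hu.continuous
    exact hRs ▸ (hcos.integral_hasStrictDerivAt 0 l).hasDerivAt.differentiableAt.const_add R₀
  have hκ : ContinuousAt (deriv u) l := (hu.continuous_deriv le_rfl).continuousAt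
  have hσ : ContinuousAt (fun t => Real.sin (u t)) l :=
    (Real.continuous_sin.comp hu.continuous).continuousAt
  have hl : ((0 : ℝ), l) ∈ S := by simpa using hsurf 0
  have hGSl := hGS (0, l) hl
  rw [fderivWithin_mul_fderivWithin_apply_eq_zero_of_const_on_line hsurf (by simp [hψ0]),
    fderivWithin_mercierLuc_weight_mul_apply_fst (hUD _ hl)
      (hψ.differentiableWithinAt_fderivWithin_apply hUD hl _) hκ hσ hRsd (hRspos l).ne',
    hψ1] at hGSl
  simp only [hψ0, zero_mul, add_zero, zero_add, div_one] at hGSl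
  have hRs0 := (hRspos l).ne'
  field_simp at hGSl ⊢
  linear_combination hGSl

/-- **Second-order coefficient of the local Grad–Shafranov expansion (C.9).**
In Mercier–Luc coordinates `(ρ, l)`, if `ψ` is C² on `S = [0, ε) × ℝ` and
satisfies the Grad–Shafranov equation
`(R/(1+ρ/R_c)) [ ∂_l( ((1+ρ/R_c)/R) ∂_l ψ ) + ∂_ρ( ((1+ρ/R_c)/R) ∂_ρ ψ ) ]
  = −R² p'(ψ) − F(ψ) F'(ψ)`
with `ψ(0, l) = ψ₀` and `∂_ρψ(0, l) = −R_s B_{ps}`, then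
`ψ₂(l) = (1/2) ∂²_ρψ(0, l)
  = −(1/2)[ R_s B_{ps} (sin u / R_s − 1/R_c) + R_s² p'(ψ₀) + F(ψ₀) F'(ψ₀) ]`,
where `1/R_c = u'` (units with `μ₀ = 1`). -/
theorem grad_shafranov_second_order_coefficient
    (u : ℝ → ℝ) (hu : ContDiff ℝ 1 u)
    (R₀ : ℝ) (Rs : ℝ → ℝ)
    (hRs : Rs = fun l => R₀ + ∫ t in (0 : ℝ)..l, Real.cos (u t))
    (hRspos : ∀ l : ℝ, 0 < Rs l)
    (Rf : ℝ × ℝ → ℝ) (hRf : Rf = fun q => Rs q.2 + q.1 * Real.sin (u q.2))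
    (p F : ℝ → ℝ) (hp : ContDiff ℝ 1 p) (hF : ContDiff ℝ 1 F)
    (ε : ℝ) (hε : 0 < ε)
    (S : Set (ℝ × ℝ)) (hS : S = Set.Ico (0 : ℝ) ε ×ˢ (Set.univ : Set ℝ))
    (ψ : ℝ × ℝ → ℝ) (hψ : ContDiffOn ℝ 2 ψ S)
    -- the Grad–Shafranov equation in Mercier–Luc coordinates:
    (hGS : ∀ q ∈ S,
      (Rf q / (1 + q.1 * deriv u q.2)) *
        (fderivWithin ℝ
            (fun q' => ((1 + q'.1 * deriv u q'.2) / Rf q') *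
              fderivWithin ℝ ψ S q' (0, 1)) S q (0, 1) +
         fderivWithin ℝ
            (fun q' => ((1 + q'.1 * deriv u q'.2) / Rf q') *
              fderivWithin ℝ ψ S q' (1, 0)) S q (1, 0)) =
        -(Rf q) ^ 2 * deriv p (ψ q) - F (ψ q) * deriv F (ψ q))
    -- on-surface data: `ψ(0, l) = ψ₀` and `∂_ρψ(0, l) = −R_s B_{ps}`:
    (ψ₀ : ℝ) (hψ0 : ∀ l : ℝ, ψ (0, l) = ψ₀)
    (Bps : ℝ → ℝ) (hBpspos : ∀ l : ℝ, 0 < Bps l)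
    (hψ1 : ∀ l : ℝ, fderivWithin ℝ ψ S (0, l) (1, 0) = -(Rs l * Bps l)) :
    ∀ l : ℝ,
      (1 / 2) * fderivWithin ℝ (fun q => fderivWithin ℝ ψ S q (1, 0)) S (0, l) (1, 0) =
        -(1 / 2) * (Rs l * Bps l * (Real.sin (u l) / Rs l - deriv u l) +
          (Rs l) ^ 2 * deriv p ψ₀ + F ψ₀ * deriv F ψ₀) :=
  grad_shafranov_second_order_coefficient_general u hu R₀ Rs hRs hRspos Rf hRf p F ε hε S hS ψ hψ
    hGS ψ₀ hψ0 Bps hψ1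
end

section
/- Under the hypotheses of the local Grad–Shafranov expansion (u C¹ with 1/R_c = u', R_s(l) > 0, R(ρ,l) = R_s + ρ sin u, ψ C² satisfying the Grad–Shafranov equation in Mercier–Luc coordinates with ψ(0,l) = ψ₀ and ∂_ρψ(0,l) = −R_s B_{ps}), define the field strength B(ρ, l) by B² = F(ψ)²/R² + ( (1/R) ∂_ρψ )², and set B_s(l) := √( F(ψ₀)²/R_s² + B_{ps}² ) (so B(0,l) = B_s). If B_s(l) > 0, then the radial gradient of the field strength on the surface is ∂_ρ B(0, l) = (1/B_s) ( −B_{ps}²/R_c + R_s B_{ps} p'(ψ₀) − F(ψ₀)² sin u / R_s³ ). (Equation (C.16); units with μ₀ = 1.) -/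
/-! On the surface `ψ` is constant, so `∂_l ψ` vanishes along `ρ = 0`, and with it the
`l`-term `∂_l(w ∂_l ψ)` of the Grad–Shafranov operator, `w = (1 + ρ u')/R`. What remains at
`ρ = 0` is `∂_ρ w · ∂_ρ ψ + w ∂_ρ² ψ`, so the equation determines `∂_ρ² ψ` in terms of
`p'(ψ₀)`, `F F'(ψ₀)`, the curvature `u'` and `sin u = ∂_ρ R`. Differentiating
`B = √(F(ψ)² + (∂_ρ ψ)²) / R` in `ρ` and inserting `∂_ρ ψ = -R_s B_ps` and this value of
`∂_ρ² ψ`, the `F F'` terms cancel and (C.16) remains. -/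

open Real Set Filter Topology Asymptotics

theorem HasFDerivWithinAt.hasDerivAt_prodMk_right {E : Type*} [NormedAddCommGroup E]
    [NormedSpace ℝ E] {f : ℝ × ℝ → E} {f' : ℝ × ℝ →L[ℝ] E} {s : Set (ℝ × ℝ)} {x t : ℝ}
    (hf : HasFDerivWithinAt f f' s (x, t)) (hs : ∀ τ, (x, τ) ∈ s) :
    HasDerivAt (fun τ => f (x, τ)) (f' (0, 1)) t := by
  have hline : HasDerivAt (fun τ : ℝ => (x, τ)) ((0 : ℝ), (1 : ℝ)) t :=
    (hasDerivAt_const t x).prodMk (hasDerivAt_id t)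
  exact hasDerivWithinAt_univ.mp
    (hf.comp_hasDerivWithinAt t (hline.hasDerivWithinAt (s := univ)) fun τ _ => hs τ)

theorem fderivWithin_apply_zero_one_eq_zero_of_forall_eq {E : Type*} [NormedAddCommGroup E]
    [NormedSpace ℝ E] {f : ℝ × ℝ → E} {s : Set (ℝ × ℝ)} {x t : ℝ} {c : E}
    (hf : DifferentiableWithinAt ℝ f s (x, t)) (hs : ∀ τ, (x, τ) ∈ s)
    (hc : ∀ τ, f (x, τ) = c) :
    fderivWithin ℝ f s (x, t) (0, 1) = 0 := by
  have hconst : (fun τ => f (x, τ)) = fun _ => c := funext hc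
  exact (hf.hasFDerivWithinAt.hasDerivAt_prodMk_right hs).unique
    (hconst ▸ hasDerivAt_const t c)

theorem hasFDerivAt_fst_mul_comp_snd {E : Type*} [NormedAddCommGroup E] [NormedSpace ℝ E]
    {g : E → ℝ} {x : E} (hg : ContinuousAt g x) :
    HasFDerivAt (fun q : ℝ × E => q.1 * g q.2) (g x • ContinuousLinearMap.fst ℝ ℝ E) (0, x) := by
  rw [hasFDerivAt_iff_isLittleO_nhds_zero]
  have hfst : (fun h : ℝ × E => h.1) =O[𝓝 0] fun h => ‖h‖ :=
    isBigO_fst_prod'.trans (isBigO_norm_right.mpr (isBigO_refl _ _))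
  have hosc : (fun h : ℝ × E => g (x + h.2) - g x) =o[𝓝 0] fun _ => (1 : ℝ) := by
    have hshift : Tendsto (fun h : ℝ × E => x + h.2) (𝓝 0) (𝓝 x) := by
      simpa using (continuous_snd.tendsto (0 : ℝ × E)).const_add x
    exact (isLittleO_one_iff ℝ).mpr (tendsto_sub_nhds_zero_iff.mpr (hg.tendsto.comp hshift))
  refine ((hfst.mul_isLittleO hosc).congr_left fun h => ?_).trans_isBigO ?_
  · simp only [Prod.fst_add, zero_add, Prod.snd_add, zero_mul, sub_zero, smul_apply,
      ContinuousLinearMap.coe_fst', smul_eq_mul]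
    ring
  · simpa using (isBigO_refl (fun h : ℝ × E => h) (𝓝 0)).norm_left

/-- `∂_l(w ∂_l ψ) + ∂_ρ(w ∂_ρ ψ)` in the coordinates `q = (ρ, l)`. -/
noncomputable def weightedLaplacian (w ψ : ℝ × ℝ → ℝ) (S : Set (ℝ × ℝ)) (q : ℝ × ℝ) : ℝ :=
  fderivWithin ℝ (fun q' => w q' * fderivWithin ℝ ψ S q' (0, 1)) S q (0, 1) +
    fderivWithin ℝ (fun q' => w q' * fderivWithin ℝ ψ S q' (1, 0)) S q (1, 0)

theorem weightedLaplacian_eq_of_forall_eq_on_line {w ψ : ℝ × ℝ → ℝ} {w' : ℝ × ℝ →L[ℝ] ℝ}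
    {S : Set (ℝ × ℝ)} {x l c : ℝ} (hS : ∀ τ, (x, τ) ∈ S) (hSu : UniqueDiffWithinAt ℝ S (x, l))
    (hw : HasFDerivWithinAt w w' S (x, l)) (hψ : ∀ τ, DifferentiableWithinAt ℝ ψ S (x, τ))
    (hψ' : DifferentiableWithinAt ℝ (fderivWithin ℝ ψ S) S (x, l)) (hψc : ∀ τ, ψ (x, τ) = c) :
    weightedLaplacian w ψ S (x, l) =
      w' (1, 0) * fderivWithin ℝ ψ S (x, l) (1, 0) +
        w (x, l) * fderivWithin ℝ (fun q => fderivWithin ℝ ψ S q (1, 0)) S (x, l) (1, 0) := by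
  have hψ'apply (v : ℝ × ℝ) :
      DifferentiableWithinAt ℝ (fun q => fderivWithin ℝ ψ S q v) S (x, l) :=
    hψ'.clm_apply (differentiableWithinAt_const v)
  have htangential (τ : ℝ) : fderivWithin ℝ ψ S (x, τ) (0, 1) = 0 :=
    fderivWithin_apply_zero_one_eq_zero_of_forall_eq (hψ τ) hS hψc
  have hl : fderivWithin ℝ (fun q' => w q' * fderivWithin ℝ ψ S q' (0, 1)) S (x, l) (0, 1) = 0 :=
    fderivWithin_apply_zero_one_eq_zero_of_forall_eq (hw.differentiableWithinAt.mul (hψ'apply _)) hS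
      fun τ => by rw [htangential, mul_zero]
  rw [weightedLaplacian, hl, fderivWithin_fun_mul hSu hw.differentiableWithinAt (hψ'apply _),
    hw.fderivWithin hSu]
  simp only [zero_add, add_apply, smul_apply, smul_eq_mul]
  ring

theorem fderivWithin_sqrt_sq_div_add_sq_div {E : Type*} [NormedAddCommGroup E] [NormedSpace ℝ E]
    {f g r : E → ℝ} {f' g' r' : E →L[ℝ] ℝ} {s : Set E} {x : E} (hs : UniqueDiffWithinAt ℝ s x)
    (hf : HasFDerivWithinAt f f' s x) (hg : HasFDerivWithinAt g g' s x)
    (hr : HasFDerivWithinAt r r' s x) (hrx : r x ≠ 0)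
    (hx : f x ^ 2 / r x ^ 2 + (g x / r x) ^ 2 ≠ 0) (v : E) :
    fderivWithin ℝ (fun y => √(f y ^ 2 / r y ^ 2 + (g y / r y) ^ 2)) s x v =
      (f x * f' v + g x * g' v - (f x ^ 2 + g x ^ 2) * r' v / r x) /
        (r x ^ 2 * √(f x ^ 2 / r x ^ 2 + (g x / r x) ^ 2)) := by
  have hinv := (hasDerivAt_inv hrx).comp_hasFDerivWithinAt x hr
  have hinv2 := (hasDerivAt_inv (pow_ne_zero 2 hrx)).comp_hasFDerivWithinAt x (hr.pow 2)
  have hG := ((hf.pow 2).mul hinv2).add ((hg.mul hinv).pow 2)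
  simp only [Function.comp_def, Pi.mul_def, Pi.add_def] at hG
  simp only [div_eq_mul_inv] at hx ⊢
  rw [(hG.sqrt hx).fderivWithin hs]
  simp only [one_div, mul_inv_rev, Nat.add_one_sub_one, pow_one, nsmul_eq_mul, Nat.cast_ofNat,
    neg_smul, smul_neg, smul_add, add_apply, neg_apply, smul_apply, smul_eq_mul]
  field_simp
  ring

section MercierLuc

variable {Rs u : ℝ → ℝ} {l r : ℝ}

noncomputable def majorRadius (Rs u : ℝ → ℝ) (q : ℝ × ℝ) : ℝ := Rs q.2 + q.1 * sin (u q.2)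

noncomputable def mercierLucWeight (Rs u : ℝ → ℝ) (q : ℝ × ℝ) : ℝ :=
  (1 + q.1 * deriv u q.2) / majorRadius Rs u q

@[simp]
theorem majorRadius_zero_left : majorRadius Rs u (0, l) = Rs l := by
  simp [majorRadius]

theorem hasFDerivAt_majorRadius (hRs : HasDerivAt Rs r l) (hu : ContinuousAt u l) :
    HasFDerivAt (majorRadius Rs u)
      (r • ContinuousLinearMap.snd ℝ ℝ ℝ + sin (u l) • ContinuousLinearMap.fst ℝ ℝ ℝ) (0, l) :=
  (hRs.comp_hasFDerivAt _ hasFDerivAt_snd).add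
    (hasFDerivAt_fst_mul_comp_snd (continuous_sin.continuousAt.comp hu))

theorem hasFDerivAt_mercierLucWeight (hRs : HasDerivAt Rs r l) (hRsl : Rs l ≠ 0)
    (hu : ContinuousAt u l) (hu' : ContinuousAt (deriv u) l) :
    HasFDerivAt (mercierLucWeight Rs u)
      ((Rs l)⁻¹ • (deriv u l • ContinuousLinearMap.fst ℝ ℝ ℝ) -
        (Rs l ^ 2)⁻¹ •
          (r • ContinuousLinearMap.snd ℝ ℝ ℝ + sin (u l) • ContinuousLinearMap.fst ℝ ℝ ℝ))
      (0, l) := by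
  have hN := (hasFDerivAt_fst_mul_comp_snd hu').const_add 1
  have hRinv := (hasDerivAt_inv (by simpa using hRsl)).comp_hasFDerivAt _
    (hasFDerivAt_majorRadius (u := u) hRs hu)
  rw [show mercierLucWeight Rs u = fun q => (1 + q.1 * deriv u q.2) * (majorRadius Rs u q)⁻¹ from
    funext fun q => div_eq_mul_inv _ _]
  refine (hN.mul hRinv).congr_fderiv (ContinuousLinearMap.ext fun v => ?_)
  simp only [zero_mul, add_zero, majorRadius_zero_left, smul_add, neg_smul, smul_neg, one_smul,
    Function.comp_apply, add_apply, neg_apply, smul_apply, ContinuousLinearMap.coe_snd',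
    smul_eq_mul, ContinuousLinearMap.coe_fst', sub_apply]
  ring

def IsGradShafranovSolution (Rs u p F : ℝ → ℝ) (ψ : ℝ × ℝ → ℝ) (S : Set (ℝ × ℝ)) : Prop :=
  ∀ q ∈ S, majorRadius Rs u q / (1 + q.1 * deriv u q.2) *
      weightedLaplacian (mercierLucWeight Rs u) ψ S q =
    -majorRadius Rs u q ^ 2 * deriv p (ψ q) - F (ψ q) * deriv F (ψ q)

theorem IsGradShafranovSolution.radial_secondDeriv {p F : ℝ → ℝ} {ψ : ℝ × ℝ → ℝ}
    {S : Set (ℝ × ℝ)} {ψ₀ : ℝ} (hGS : IsGradShafranovSolution Rs u p F ψ S)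
    (hS : ∀ τ, ((0 : ℝ), τ) ∈ S) (hSu : UniqueDiffWithinAt ℝ S (0, l))
    (hRs : HasDerivAt Rs r l) (hRsl : Rs l ≠ 0) (hu : ContinuousAt u l)
    (hu' : ContinuousAt (deriv u) l) (hψ : ∀ τ, DifferentiableWithinAt ℝ ψ S (0, τ))
    (hψ' : DifferentiableWithinAt ℝ (fderivWithin ℝ ψ S) S (0, l)) (hψ0 : ∀ τ, ψ (0, τ) = ψ₀) :
    fderivWithin ℝ (fun q => fderivWithin ℝ ψ S q (1, 0)) S (0, l) (1, 0) =
      -Rs l ^ 2 * deriv p ψ₀ - F ψ₀ * deriv F ψ₀ -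
        (deriv u l - sin (u l) / Rs l) * fderivWithin ℝ ψ S (0, l) (1, 0) := by
  have h := hGS _ (hS l)
  rw [weightedLaplacian_eq_of_forall_eq_on_line hS hSu
    (hasFDerivAt_mercierLucWeight hRs hRsl hu hu').hasFDerivWithinAt hψ hψ' hψ0] at h
  simp only [majorRadius_zero_left, zero_mul, add_zero, div_one, smul_add, sub_apply, smul_apply,
    ContinuousLinearMap.coe_fst', smul_eq_mul, mul_one, add_apply, ContinuousLinearMap.coe_snd',
    mul_zero, zero_add, mercierLucWeight, one_div, hψ0, neg_mul] at h
  field_simp at h ⊢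
  linear_combination h

end MercierLuc

theorem field_strength_radial_gradient_general
    (u : ℝ → ℝ) (hu : ContDiff ℝ 1 u)
    (R₀ : ℝ) (Rs : ℝ → ℝ)
    (hRs : Rs = fun l => R₀ + ∫ t in (0 : ℝ)..l, Real.cos (u t))
    (hRspos : ∀ l : ℝ, 0 < Rs l)
    (Rf : ℝ × ℝ → ℝ) (hRf : Rf = fun q => Rs q.2 + q.1 * Real.sin (u q.2))
    (p F : ℝ → ℝ) (hF : ContDiff ℝ 1 F)
    (ε : ℝ) (hε : 0 < ε)
    (S : Set (ℝ × ℝ)) (hS : S = Set.Ico (0 : ℝ) ε ×ˢ (Set.univ : Set ℝ))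
    (ψ : ℝ × ℝ → ℝ) (hψ : ContDiffOn ℝ 2 ψ S)
    -- the Grad–Shafranov equation in Mercier–Luc coordinates:
    (hGS : ∀ q ∈ S,
      (Rf q / (1 + q.1 * deriv u q.2)) *
        (fderivWithin ℝ
            (fun q' => ((1 + q'.1 * deriv u q'.2) / Rf q') *
              fderivWithin ℝ ψ S q' (0, 1)) S q (0, 1) +
         fderivWithin ℝ
            (fun q' => ((1 + q'.1 * deriv u q'.2) / Rf q') *
              fderivWithin ℝ ψ S q' (1, 0)) S q (1, 0)) =
        -(Rf q) ^ 2 * deriv p (ψ q) - F (ψ q) * deriv F (ψ q))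
    -- on-surface data: `ψ(0, l) = ψ₀` and `∂_ρψ(0, l) = −R_s B_{ps}`:
    (ψ₀ : ℝ) (hψ0 : ∀ l : ℝ, ψ (0, l) = ψ₀)
    (Bps : ℝ → ℝ) (hψ1 : ∀ l : ℝ, fderivWithin ℝ ψ S (0, l) (1, 0) = -(Rs l * Bps l))
    -- the field strength `B` with `B² = F(ψ)²/R² + ((1/R) ∂_ρψ)²`, and its
    -- on-surface value `B_s`:
    (Bfield : ℝ × ℝ → ℝ)
    (hBfield : Bfield = fun q =>
      Real.sqrt (F (ψ q) ^ 2 / (Rf q) ^ 2 + (fderivWithin ℝ ψ S q (1, 0) / Rf q) ^ 2))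
    (Bs : ℝ → ℝ)
    (hBs : Bs = fun l => Real.sqrt (F ψ₀ ^ 2 / (Rs l) ^ 2 + (Bps l) ^ 2))
    (hBspos : ∀ l : ℝ, 0 < Bs l) :
    ∀ l : ℝ,
      fderivWithin ℝ Bfield S (0, l) (1, 0) =
        (1 / Bs l) * (-(Bps l) ^ 2 * deriv u l + Rs l * Bps l * deriv p ψ₀ -
          F ψ₀ ^ 2 * Real.sin (u l) / (Rs l) ^ 3) := by
  subst hRf hBfield hBs
  intro l
  beta_reduce at hBspos ⊢
  have hline (τ : ℝ) : ((0 : ℝ), τ) ∈ S := hS ▸ ⟨⟨le_rfl, hε⟩, trivial⟩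
  have hU : UniqueDiffOn ℝ S := hS ▸ (uniqueDiffOn_Ico 0 ε).prod uniqueDiffOn_univ
  have hψd := hψ.differentiableOn two_ne_zero
  have hψ'd := (hψ.fderivWithin hU le_rfl).differentiableOn one_ne_zero _ (hline l)
  have hRs' : HasDerivAt Rs (cos (u l)) l := hRs ▸
    ((continuous_cos.comp hu.continuous).integral_hasStrictDerivAt 0 l).hasDerivAt.const_add R₀
  have hu₀ := hu.continuous.continuousAt (x := l)
  have hu' := (hu.continuous_deriv le_rfl).continuousAt (x := l)
  have hGS' : IsGradShafranovSolution Rs u p F ψ S := hGS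
  have hψρρ := hGS'.radial_secondDeriv hline (hU _ (hline l)) hRs' (hRspos l).ne' hu₀ hu'
    (fun τ => hψd _ (hline τ)) hψ'd hψ0
  have hFψ := (hF.differentiable one_ne_zero (ψ (0, l))).hasDerivAt.comp_hasFDerivWithinAt (0, l)
    (hψd _ (hline l)).hasFDerivWithinAt
  have hψρ := (hψ'd.clm_apply (differentiableWithinAt_const ((1 : ℝ), (0 : ℝ)))).hasFDerivWithinAt
  have hR := (hasFDerivAt_majorRadius hRs' hu₀).hasFDerivWithinAt (s := S)
  have hG : F (ψ (0, l)) ^ 2 / majorRadius Rs u (0, l) ^ 2 +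
      (fderivWithin ℝ ψ S (0, l) (1, 0) / majorRadius Rs u (0, l)) ^ 2 =
      F ψ₀ ^ 2 / Rs l ^ 2 + Bps l ^ 2 := by
    rw [hψ0, hψ1, majorRadius_zero_left]
    field_simp [(hRspos l).ne']
  refine (fderivWithin_sqrt_sq_div_add_sq_div (hU _ (hline l)) hFψ hψρ hR
    (by simpa using (hRspos l).ne')
    (by rw [Function.comp_apply, hG]; exact (sqrt_pos.mp (hBspos l)).ne') (1, 0)).trans ?_
  rw [Function.comp_apply, hG, hψρρ, hψ0]
  simp only [smul_apply, hψ1, smul_eq_mul, mul_neg, neg_mul, sub_neg_eq_add, even_two,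
    Even.neg_pow, add_apply, ContinuousLinearMap.coe_snd', mul_zero, ContinuousLinearMap.coe_fst',
    mul_one, zero_add, majorRadius_zero_left, one_div]
  field_simp [(hRspos l).ne']
  ring

/-- **On-surface radial gradient of the field strength (C.16).**
In Mercier–Luc coordinates `(ρ, l)`, with `ψ` a C² solution of the Grad–Shafranov
equation on `S = [0, ε) × ℝ` with `ψ(0, l) = ψ₀`, `∂_ρψ(0, l) = −R_s B_{ps}`, and
the field strength defined by `B² = F(ψ)²/R² + ((1/R)∂_ρψ)²` with on-surface value
`B_s = √(F(ψ₀)²/R_s² + B_{ps}²) > 0`, the radial gradient of `B` on the surface is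
`∂_ρB(0, l) = (1/B_s)( −B_{ps}²/R_c + R_s B_{ps} p'(ψ₀) − F(ψ₀)² sin u / R_s³ )`,
where `1/R_c = u'` (units with `μ₀ = 1`). -/
theorem field_strength_radial_gradient
    (u : ℝ → ℝ) (hu : ContDiff ℝ 1 u)
    (R₀ : ℝ) (Rs : ℝ → ℝ)
    (hRs : Rs = fun l => R₀ + ∫ t in (0 : ℝ)..l, Real.cos (u t))
    (hRspos : ∀ l : ℝ, 0 < Rs l)
    (Rf : ℝ × ℝ → ℝ) (hRf : Rf = fun q => Rs q.2 + q.1 * Real.sin (u q.2))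
    (p F : ℝ → ℝ) (hp : ContDiff ℝ 1 p) (hF : ContDiff ℝ 1 F)
    (ε : ℝ) (hε : 0 < ε)
    (S : Set (ℝ × ℝ)) (hS : S = Set.Ico (0 : ℝ) ε ×ˢ (Set.univ : Set ℝ))
    (ψ : ℝ × ℝ → ℝ) (hψ : ContDiffOn ℝ 2 ψ S)
    -- the Grad–Shafranov equation in Mercier–Luc coordinates:
    (hGS : ∀ q ∈ S,
      (Rf q / (1 + q.1 * deriv u q.2)) *
        (fderivWithin ℝ
            (fun q' => ((1 + q'.1 * deriv u q'.2) / Rf q') *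
              fderivWithin ℝ ψ S q' (0, 1)) S q (0, 1) +
         fderivWithin ℝ
            (fun q' => ((1 + q'.1 * deriv u q'.2) / Rf q') *
              fderivWithin ℝ ψ S q' (1, 0)) S q (1, 0)) =
        -(Rf q) ^ 2 * deriv p (ψ q) - F (ψ q) * deriv F (ψ q))
    -- on-surface data: `ψ(0, l) = ψ₀` and `∂_ρψ(0, l) = −R_s B_{ps}`:
    (ψ₀ : ℝ) (hψ0 : ∀ l : ℝ, ψ (0, l) = ψ₀)
    (Bps : ℝ → ℝ) (hBpspos : ∀ l : ℝ, 0 < Bps l)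
    (hψ1 : ∀ l : ℝ, fderivWithin ℝ ψ S (0, l) (1, 0) = -(Rs l * Bps l))
    -- the field strength `B` with `B² = F(ψ)²/R² + ((1/R) ∂_ρψ)²`, and its
    -- on-surface value `B_s`:
    (Bfield : ℝ × ℝ → ℝ)
    (hBfield : Bfield = fun q =>
      Real.sqrt (F (ψ q) ^ 2 / (Rf q) ^ 2 + (fderivWithin ℝ ψ S q (1, 0) / Rf q) ^ 2))
    (Bs : ℝ → ℝ)
    (hBs : Bs = fun l => Real.sqrt (F ψ₀ ^ 2 / (Rs l) ^ 2 + (Bps l) ^ 2))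
    (hBspos : ∀ l : ℝ, 0 < Bs l) :
    ∀ l : ℝ,
      fderivWithin ℝ Bfield S (0, l) (1, 0) =
        (1 / Bs l) * (-(Bps l) ^ 2 * deriv u l + Rs l * Bps l * deriv p ψ₀ -
          F ψ₀ ^ 2 * Real.sin (u l) / (Rs l) ^ 3) :=
  field_strength_radial_gradient_general u hu R₀ Rs hRs hRspos Rf hRf p F hF ε hε S hS ψ hψ hGS ψ₀
    hψ0 Bps hψ1 Bfield hBfield Bs hBs hBspos
end
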